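/- Let n ≥ 3 and p ∈ ℝ, and suppose f : ℝ₊ × (ℝⁿ \ {0}) → ℝ satisfies: (i) the functional equation f(s,x) = λ^{p/n} f(sλ^{1/n}, φ_λᵀx) + (1−λ)^{p/n} f(s(1−λ)^{1/n}, ψ_λᵀx) for all λ ∈ (0,1), where φ_λ, ψ_λ are as in the paper; (ii) f(s, cx) = c^{-p} f(s,x) for all c > 0; (iii) for every s > 0 the restriction of f(s,·) to S^{n-1} has countable support; (iv) for every x ≠ 0 the function f(·,x) is bounded below on some open interval; (v) f(s, πx) = f(s,x) for every permutation matrix π and all (s,x). If f(s, ±e₁) = 0 for all s > 0, then f(s,x) = 0 for all s > 0 and all x ∉ span{e₁+⋯+e_n}. -/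

import Mathlib

open Set

/-- Transpose of the map `φ_λ` from the paper. -/
noncomputable def phiT {m : ℕ} (l : ℝ) (x : EuclideanSpace ℝ (Fin (m + 3))) :
    EuclideanSpace ℝ (Fin (m + 3)) :=
  WithLp.toLp 2 (Function.update x 1 ((1 - l) * x 0 + l * x 1))

/-- Transpose of the map `ψ_λ` from the paper. -/
noncomputable def psiT {m : ℕ} (l : ℝ) (x : EuclideanSpace ℝ (Fin (m + 3))) :
    EuclideanSpace ℝ (Fin (m + 3)) :=
  WithLp.toLp 2 (Function.update x 0 ((1 - l) * x 0 + l * x 1))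

/-!
Induction on the number of non-zero coordinates. Conjugated by permutations, the functional
equation expresses `f s v` through the two vectors obtained by replacing `v a`, resp. `v b`, by
the mixture `(1 - l) v a + l v b`. A vector with a single non-zero coordinate is a positive
multiple of `± e₁` up to a permutation. Coordinates of opposite signs can be mixed into `0`,
leaving two vectors of smaller support; two different coordinates of the same sign arise by
mixing from a vector of mixed signs with the same support. In the remaining case `v` has a zero
coordinate and two equal non-zero ones. Filling in the zero coordinate relates `f (·) v` to
`f s` on a line meeting each ray from the origin at most once, so by homogeneity and countable
support on the sphere `f t v = 0` for all but countably many `t`. Mixing the two equal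
coordinates writes `f t v` through two values of `f (·) v`, at points that can be chosen
outside this countable set.
-/

open Function
open scoped Finset

section Support

variable {ι : Type*} [Fintype ι]

theorem exists_eq_zero_of_card_lt {v : ι → ℝ} (h : #{j | v j ≠ 0} < Fintype.card ι) :
    ∃ j, v j = 0 := by
  by_contra! hv
  exact h.ne (by simp [hv])

variable [DecidableEq ι]

theorem card_update_zero_add_one {v : ι → ℝ} {i : ι} (hi : v i ≠ 0) :
    #{j | update v i 0 j ≠ 0} + 1 = #{j | v j ≠ 0} := by
  have : ({j | update v i 0 j ≠ 0} : Finset ι) = ({j | v j ≠ 0} : Finset ι).erase i := by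
    ext j
    by_cases hj : j = i <;> simp [hj]
  rw [this, Finset.card_erase_add_one (by simpa using hi)]

theorem card_update_le (v : ι → ℝ) (i : ι) (x : ℝ) :
    #{j | update v i x j ≠ 0} ≤ #{j | v j ≠ 0} + 1 := by
  calc #{j | update v i x j ≠ 0}
      ≤ #(insert i ({j | v j ≠ 0} : Finset ι)) := by
        refine Finset.card_le_card fun j hj => ?_
        by_cases hji : j = i <;> simp_all
    _ ≤ #{j | v j ≠ 0} + 1 := Finset.card_insert_le _ _

theorem card_update_le_of_ne_zero {v : ι → ℝ} {i : ι} (hi : v i ≠ 0) (x : ℝ) :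
    #{j | update v i x j ≠ 0} ≤ #{j | v j ≠ 0} := by
  have := card_update_le (update v i 0) i x
  rw [update_idem] at this
  linarith [card_update_zero_add_one hi]

end Support

theorem exists_perm_apply_zero_apply_one {n : ℕ} {a b : Fin (n + 2)} (hab : a ≠ b) :
    ∃ σ : Equiv.Perm (Fin (n + 2)), σ 0 = a ∧ σ 1 = b := by
  set c := Equiv.swap 0 a b
  have hc : c ≠ 0 := by simpa [c, Equiv.swap_apply_eq_iff] using hab.symm
  refine ⟨Equiv.swap 0 a * Equiv.swap 1 c, ?_, ?_⟩
  · simp [Equiv.swap_apply_of_ne_of_ne, hc.symm]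
  · simp [c]

theorem div_sub_mem_Ioo_of_mul_neg {x y : ℝ} (h : x * y < 0) :
    x / (x - y) ∈ Ioo (0 : ℝ) 1 := by
  rcases mul_neg_iff.1 h with ⟨hx, hy⟩ | ⟨hx, hy⟩
  · exact ⟨div_pos hx (by linarith), (div_lt_one (by linarith)).2 (by linarith)⟩
  · exact ⟨div_pos_of_neg_of_neg hx (by linarith),
      (div_lt_one_of_neg (by linarith)).2 (by linarith)⟩

section EuclideanSpace

variable {ι : Type*} [DecidableEq ι]

theorem toLp_update_ne_zero {v : EuclideanSpace ℝ ι} {a b : ι} (hab : a ≠ b) (ha : v a ≠ 0)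
    (x : ℝ) : (WithLp.toLp 2 (update v b x) : EuclideanSpace ℝ ι) ≠ 0 := by
  intro h
  exact ha (by simpa [update_of_ne hab] using congr($h a))

variable [Fintype ι]

/-- The line `ζ ↦ update v b ζ` meets every ray from the origin at most once. -/
theorem countable_setOf_update_ne_zero {p : ℝ} {g : EuclideanSpace ℝ ι → ℝ}
    (hhom : ∀ x : EuclideanSpace ℝ ι, x ≠ 0 → ∀ c : ℝ, 0 < c → g (c • x) = c ^ (-p) * g x)
    (hcount : {x ∈ Metric.sphere (0 : EuclideanSpace ℝ ι) 1 | g x ≠ 0}.Countable)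
    {v : EuclideanSpace ℝ ι} {a b : ι} (hab : a ≠ b) (ha : v a ≠ 0) :
    {ζ : ℝ | g (WithLp.toLp 2 (update v b ζ)) ≠ 0}.Countable := by
  refine (hcount.image fun y => v a * y b / y a).mono fun ζ hζ => ?_
  set z : EuclideanSpace ℝ ι := WithLp.toLp 2 (update v b ζ)
  have hz : z ≠ 0 := toLp_update_ne_zero hab ha ζ
  have hnorm : 0 < ‖z‖ := norm_pos_iff.2 hz
  have hza : z a = v a := update_of_ne hab _ _
  have hzb : z b = ζ := update_self _ _ _
  refine ⟨‖z‖⁻¹ • z, ⟨?_, fun hy => hζ ?_⟩, ?_⟩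
  · rw [mem_sphere_zero_iff_norm, norm_smul, norm_inv, norm_norm, inv_mul_cancel₀ hnorm.ne']
  · show g z = 0
    rw [← smul_inv_smul₀ hnorm.ne' z, hhom _ (by simpa using hz) _ hnorm, hy, mul_zero]
  · simp only [PiLp.smul_apply, smul_eq_mul, hza, hzb]
    field_simp

theorem exists_apply_ne_of_notMem_span [Nonempty ι] {x : EuclideanSpace ℝ ι}
    (hx : x ∉ Submodule.span ℝ {∑ i, EuclideanSpace.single i (1 : ℝ)}) :
    ∃ i j, x i ≠ x j := by
  contrapose! hx
  obtain ⟨i₀⟩ := ‹Nonempty ι›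
  refine Submodule.mem_span_singleton.2 ⟨x i₀, ?_⟩
  ext j
  simp [hx i₀ j]

end EuclideanSpace

def PermInvariant {ι : Type*} (f : ℝ → EuclideanSpace ℝ ι → ℝ) : Prop :=
  ∀ σ : Equiv.Perm ι, ∀ s : ℝ, 0 < s →
    ∀ x : EuclideanSpace ℝ ι, f s (WithLp.toLp 2 (fun i => x (σ i))) = f s x

def IsHomogeneousOfDegree {ι : Type*} (d : ℝ) (f : ℝ → EuclideanSpace ℝ ι → ℝ) : Prop :=
  ∀ s : ℝ, 0 < s → ∀ x : EuclideanSpace ℝ ι, x ≠ 0 → ∀ c : ℝ, 0 < c → f s (c • x) = c ^ d * f s x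

def HasCountableSphereSupport {ι : Type*} [Fintype ι] (f : ℝ → EuclideanSpace ℝ ι → ℝ) : Prop :=
  ∀ s : ℝ, 0 < s → {x ∈ Metric.sphere (0 : EuclideanSpace ℝ ι) 1 | f s x ≠ 0}.Countable

def VanishesAt {E : Type*} (f : ℝ → E → ℝ) (x : E) : Prop :=
  ∀ t : ℝ, 0 < t → f t x = 0

def VanishesOnSupportLT {ι : Type*} [Fintype ι] (f : ℝ → EuclideanSpace ℝ ι → ℝ) (n : ℕ) :
    Prop :=
  ∀ u : EuclideanSpace ℝ ι, u ≠ 0 → #{i | u i ≠ 0} < n → VanishesAt f u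

theorem vanishesAt_of_card_eq_one {ι : Type*} [Fintype ι] [DecidableEq ι] {p : ℝ}
    {f : ℝ → EuclideanSpace ℝ ι → ℝ}
    (hhom : IsHomogeneousOfDegree (-p) f) (hperm : PermInvariant f) {i₀ : ι}
    (hvan : ∀ s : ℝ, 0 < s → f s (EuclideanSpace.single i₀ 1) = 0 ∧
      f s (-EuclideanSpace.single i₀ 1) = 0)
    {v : EuclideanSpace ℝ ι} (hv : #{i | v i ≠ 0} = 1) : VanishesAt f v := by
  obtain ⟨j, hj⟩ := Finset.card_eq_one.1 hv
  have hsupp (i : ι) : v i ≠ 0 ↔ i = j := by simpa using Finset.ext_iff.1 hj i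
  have hvj : v j ≠ 0 := (hsupp j).2 rfl
  have key : WithLp.toLp 2 (fun i => v (Equiv.swap i₀ j i))
      = v j • EuclideanSpace.single i₀ (1 : ℝ) := by
    ext i
    by_cases hi : i = i₀
    · simp [hi]
    · have : Equiv.swap i₀ j i ≠ j := by simpa [Equiv.swap_apply_eq_iff] using hi
      simp [hi, not_not.1 (mt (hsupp _).1 this)]
  have hsingle : EuclideanSpace.single i₀ (1 : ℝ) ≠ 0 := by simp
  intro t ht
  rw [← hperm (Equiv.swap i₀ j) t ht, key]
  rcases hvj.lt_or_gt with hneg | hpos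
  · rw [← neg_smul_neg, hhom t ht _ (neg_ne_zero.2 hsingle) _ (neg_pos.2 hneg), (hvan t ht).2,
      mul_zero]
  · rw [hhom t ht _ hsingle _ hpos, (hvan t ht).1, mul_zero]

section FunctionalEquation

variable {m : ℕ} {p : ℝ} {f : ℝ → EuclideanSpace ℝ (Fin (m + 3)) → ℝ}

def SatisfiesFE (p : ℝ) (f : ℝ → EuclideanSpace ℝ (Fin (m + 3)) → ℝ) : Prop :=
  ∀ s : ℝ, 0 < s → ∀ x : EuclideanSpace ℝ (Fin (m + 3)), x ≠ 0 → ∀ l ∈ Ioo (0 : ℝ) 1,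
    f s x = l ^ (p / (m + 3 : ℝ)) * f (s * l ^ ((m + 3 : ℝ))⁻¹) (phiT l x)
      + (1 - l) ^ (p / (m + 3 : ℝ)) * f (s * (1 - l) ^ ((m + 3 : ℝ))⁻¹) (psiT l x)

theorem SatisfiesFE.apply_perm (hfe : SatisfiesFE p f) (hperm : PermInvariant f)
    {v : EuclideanSpace ℝ (Fin (m + 3))} (hv : v ≠ 0) (σ : Equiv.Perm (Fin (m + 3)))
    {s : ℝ} (hs : 0 < s) {l : ℝ} (hl : l ∈ Ioo (0 : ℝ) 1) :
    f s v = l ^ (p / (m + 3 : ℝ)) * f (s * l ^ ((m + 3 : ℝ))⁻¹)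
          (WithLp.toLp 2 (update v (σ 1) ((1 - l) * v (σ 0) + l * v (σ 1))))
      + (1 - l) ^ (p / (m + 3 : ℝ)) * f (s * (1 - l) ^ ((m + 3 : ℝ))⁻¹)
          (WithLp.toLp 2 (update v (σ 0) ((1 - l) * v (σ 0) + l * v (σ 1)))) := by
  obtain ⟨hl0, hl1⟩ := hl
  have hx : (WithLp.toLp 2 (fun i => v (σ i)) : EuclideanSpace ℝ (Fin (m + 3))) ≠ 0 := by
    contrapose! hv
    ext j
    simpa using congr($hv (σ.symm j))
  have hcomp (i : Fin (m + 3)) (w : ℝ) :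
      (fun j => update v (σ i) w (σ j)) = update (fun j => v (σ j)) i w :=
    update_comp_eq_of_injective _ σ.injective i w
  have hs₁ : 0 < s * l ^ ((m + 3 : ℝ))⁻¹ := by positivity
  have hs₂ : 0 < s * (1 - l) ^ ((m + 3 : ℝ))⁻¹ := by
    have : 0 < 1 - l := by linarith
    positivity
  rw [← hperm σ s hs, ← hperm σ _ hs₁, ← hperm σ _ hs₂]
  simpa only [phiT, psiT, WithLp.ofLp_toLp, hcomp] using hfe s hs _ hx l ⟨hl0, hl1⟩

theorem SatisfiesFE.apply_pair (hfe : SatisfiesFE p f) (hperm : PermInvariant f)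
    {v : EuclideanSpace ℝ (Fin (m + 3))} (hv : v ≠ 0) {a b : Fin (m + 3)} (hab : a ≠ b)
    {s : ℝ} (hs : 0 < s) {l : ℝ} (hl : l ∈ Ioo (0 : ℝ) 1) :
    f s v = l ^ (p / (m + 3 : ℝ)) * f (s * l ^ ((m + 3 : ℝ))⁻¹)
          (WithLp.toLp 2 (update v b ((1 - l) * v a + l * v b)))
      + (1 - l) ^ (p / (m + 3 : ℝ)) * f (s * (1 - l) ^ ((m + 3 : ℝ))⁻¹)
          (WithLp.toLp 2 (update v a ((1 - l) * v a + l * v b))) := by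
  obtain ⟨σ, rfl, rfl⟩ := exists_perm_apply_zero_apply_one hab
  exact hfe.apply_perm hperm hv σ hs hl

/-- The weight `v a / (v a - v b)` mixes the coordinates `a` and `b` into `0`. -/
theorem SatisfiesFE.apply_pair_of_mul_neg (hfe : SatisfiesFE p f) (hperm : PermInvariant f)
    {v : EuclideanSpace ℝ (Fin (m + 3))} {a b : Fin (m + 3)} (hab : v a * v b < 0)
    {s : ℝ} (hs : 0 < s) :
    f s v = (v a / (v a - v b)) ^ (p / (m + 3 : ℝ)) *
          f (s * (v a / (v a - v b)) ^ ((m + 3 : ℝ))⁻¹) (WithLp.toLp 2 (update v b 0))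
      + (1 - v a / (v a - v b)) ^ (p / (m + 3 : ℝ)) *
          f (s * (1 - v a / (v a - v b)) ^ ((m + 3 : ℝ))⁻¹)
            (WithLp.toLp 2 (update v a 0)) := by
  have hne : a ≠ b := by
    rintro rfl
    exact (mul_self_nonneg _).not_gt hab
  have hv : v ≠ 0 := by
    rintro rfl
    simp at hab
  have hsub : v a - v b ≠ 0 := by
    intro h
    rw [sub_eq_zero.1 h] at hab
    exact (mul_self_nonneg _).not_gt hab
  have hw : (1 - v a / (v a - v b)) * v a + v a / (v a - v b) * v b = 0 := by
    field_simp
    ring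
  simpa only [hw] using hfe.apply_pair hperm hv hne hs (div_sub_mem_Ioo_of_mul_neg hab)

theorem SatisfiesFE.vanishesAt_of_mul_neg (hfe : SatisfiesFE p f) (hperm : PermInvariant f)
    {n : ℕ} (hsmall : VanishesOnSupportLT f n) {u : EuclideanSpace ℝ (Fin (m + 3))}
    (hu : #{i | u i ≠ 0} ≤ n) {a b : Fin (m + 3)} (hab : u a * u b < 0) : VanishesAt f u := by
  intro t ht
  have ha : u a ≠ 0 := left_ne_zero_of_mul hab.ne
  have hb : u b ≠ 0 := right_ne_zero_of_mul hab.ne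
  have hne : a ≠ b := by
    rintro rfl
    exact (mul_self_nonneg _).not_gt hab
  obtain ⟨hl0, hl1⟩ := div_sub_mem_Ioo_of_mul_neg hab
  have hl1' : 0 < 1 - u a / (u a - u b) := by linarith
  have hcard_a := card_update_zero_add_one ha
  have hcard_b := card_update_zero_add_one hb
  rw [hfe.apply_pair_of_mul_neg hperm hab ht,
    hsmall _ (toLp_update_ne_zero hne ha 0)
      (show #{j | update u b 0 j ≠ 0} < n by omega) _ (by positivity),
    hsmall _ (toLp_update_ne_zero hne.symm hb 0)
      (show #{j | update u a 0 j ≠ 0} < n by omega) _ (by positivity)]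
  ring

/-- Replacing the smaller of two same-sign coordinates by minus the larger one gives a vector
of mixed signs, and the functional equation recovers `v` from it. -/
theorem SatisfiesFE.vanishesAt_of_abs_lt (hfe : SatisfiesFE p f) (hperm : PermInvariant f)
    {n : ℕ} (hsmall : VanishesOnSupportLT f n) {v : EuclideanSpace ℝ (Fin (m + 3))}
    (hv : #{i | v i ≠ 0} ≤ n) {a b : Fin (m + 3)} (hpos : 0 < v a * v b)
    (hlt : |v b| < |v a|) : VanishesAt f v := by
  have ha : v a ≠ 0 := left_ne_zero_of_mul hpos.ne'
  have hb : v b ≠ 0 := right_ne_zero_of_mul hpos.ne'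
  have hab : a ≠ b := by
    rintro rfl
    exact hlt.false
  set z : EuclideanSpace ℝ (Fin (m + 3)) := WithLp.toLp 2 (update v b (-v a))
  have hza : z a = v a := update_of_ne hab _ _
  have hzb : z b = -v a := update_self _ _ _
  have hz_card : #{i | z i ≠ 0} ≤ n := (card_update_le_of_ne_zero hb _).trans hv
  have hz : VanishesAt f z :=
    hfe.vanishesAt_of_mul_neg hperm hsmall hz_card (a := a) (b := b)
      (by rw [hza, hzb, mul_neg, neg_neg_iff_pos]; exact mul_self_pos.2 ha)
  have hy : VanishesAt f (WithLp.toLp 2 (update z a (v b))) :=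
    hfe.vanishesAt_of_mul_neg hperm hsmall
      ((card_update_le_of_ne_zero (hza ▸ ha) _).trans hz_card) (a := a) (b := b)
      (by simpa [update_of_ne hab.symm, hzb, mul_comm] using hpos)
  have hr0 : 0 < v b / v a := by
    simpa only [mul_div_mul_left _ _ ha] using div_pos hpos (mul_self_pos.2 ha)
  set r := v b / v a
  have hr1 : r < 1 := by
    rw [← abs_of_pos hr0, abs_div]
    exact (div_lt_one (abs_pos.2 ha)).2 hlt
  set l := (1 - r) / 2
  have hl : l ∈ Ioo (0 : ℝ) 1 := ⟨by simp only [l]; linarith, by simp only [l]; linarith⟩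
  have hw : (1 - l) * z a + l * z b = v b := by
    rw [hza, hzb]
    simp only [l, r]
    field_simp
    ring
  have hzv : WithLp.toLp 2 (update z b (v b)) = v := by
    simp [z, update_idem]
  intro t ht
  have hl' : 0 < l ^ ((m + 3 : ℝ))⁻¹ := Real.rpow_pos_of_pos hl.1 _
  have hl1 : 0 < 1 - l := by linarith [hl.2]
  have key := hfe.apply_pair hperm (v := z) (toLp_update_ne_zero hab ha _) hab
    (div_pos ht hl') hl
  rw [hw, hzv, div_mul_cancel₀ _ hl'.ne', hz _ (div_pos ht hl'), hy _ (by positivity), mul_zero,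
    add_zero] at key
  exact (mul_eq_zero.1 key.symm).resolve_left (Real.rpow_pos_of_pos hl.1 _).ne'

/-- With weight `l`, the value `v a - v a / l` at `b` mixes with `v a` into `0`; the second
vector produced has opposite signs at `d` and `b`. -/
theorem SatisfiesFE.apply_update_of_eq_zero (hfe : SatisfiesFE p f) (hperm : PermInvariant f)
    {n : ℕ} (hsmall : VanishesOnSupportLT f n) {v : EuclideanSpace ℝ (Fin (m + 3))}
    (hv : #{i | v i ≠ 0} ≤ n) {a b d : Fin (m + 3)} (hb : v b = 0) (had : a ≠ d)
    (hpos : 0 < v a * v d) {s : ℝ} (hs : 0 < s) {l : ℝ} (hl : l ∈ Ioo (0 : ℝ) 1) :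
    f s (WithLp.toLp 2 (update v b (v a - v a / l)))
      = l ^ (p / (m + 3 : ℝ)) * f (s * l ^ ((m + 3 : ℝ))⁻¹) v := by
  have ha : v a ≠ 0 := left_ne_zero_of_mul hpos.ne'
  have hd : v d ≠ 0 := right_ne_zero_of_mul hpos.ne'
  have hab : a ≠ b := by
    rintro rfl
    exact ha hb
  have hdb : d ≠ b := by
    rintro rfl
    exact hd hb
  obtain ⟨hl0, hl1⟩ := hl
  set ζ := v a - v a / l
  set z : EuclideanSpace ℝ (Fin (m + 3)) := WithLp.toLp 2 (update v b ζ)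
  have hza : z a = v a := update_of_ne hab _ _
  have hzb : z b = ζ := update_self _ _ _
  have hw : (1 - l) * z a + l * z b = 0 := by
    rw [hza, hzb]
    simp only [ζ]
    field_simp
    ring
  have hzv : WithLp.toLp 2 (update z b 0) = v := by
    simp [z, ← hb]
  have hy_card : #{i | update z a 0 i ≠ 0} ≤ n := by
    have h₁ := card_update_zero_add_one (v := z) (hza ▸ ha)
    have h₂ : #{i | z i ≠ 0} ≤ #{i | v i ≠ 0} + 1 := card_update_le v b ζ
    omega
  have hy_mix : update z a 0 d * update z a 0 b < 0 := by
    rw [update_of_ne had.symm, update_of_ne hab.symm, hzb,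
      show z d * ζ = v a * v d * (1 - 1 / l) by simp [z, update_of_ne hdb, ζ]; ring]
    exact mul_neg_of_pos_of_neg hpos (by linarith [one_lt_one_div hl0 hl1])
  have hl1' : 0 < 1 - l := by linarith
  rw [hfe.apply_pair hperm (v := z) (toLp_update_ne_zero hab ha _) hab hs ⟨hl0, hl1⟩, hw, hzv,
    hfe.vanishesAt_of_mul_neg hperm hsmall (u := WithLp.toLp 2 (update z a 0)) hy_card hy_mix _
      (by positivity), mul_zero, add_zero]

theorem SatisfiesFE.countable_setOf_ne_zero (hfe : SatisfiesFE p f) (hperm : PermInvariant f)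
    (hhom : IsHomogeneousOfDegree (-p) f) (hcount : HasCountableSphereSupport f)
    {n : ℕ} (hsmall : VanishesOnSupportLT f n) {v : EuclideanSpace ℝ (Fin (m + 3))}
    (hv : #{i | v i ≠ 0} ≤ n) {a b d : Fin (m + 3)} (hb : v b = 0) (had : a ≠ d)
    (hpos : 0 < v a * v d) : {t : ℝ | 0 < t ∧ f t v ≠ 0}.Countable := by
  have ha : v a ≠ 0 := left_ne_zero_of_mul hpos.ne'
  have hab : a ≠ b := by
    rintro rfl
    exact ha hb
  have hT (s : ℝ) (hs : 0 < s) : {t : ℝ | t ∈ Ioo 0 s ∧ f t v ≠ 0}.Countable := by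
    refine MapsTo.countable_of_injOn (f := fun t => v a - v a / (t / s) ^ (m + 3)) ?_ ?_
      (countable_setOf_update_ne_zero (hhom s hs) (hcount s hs) hab ha)
    · rintro t ⟨⟨ht, hts⟩, hft⟩
      have hl : (t / s) ^ (m + 3) ∈ Ioo (0 : ℝ) 1 :=
        ⟨by positivity, pow_lt_one₀ (by positivity) ((div_lt_one hs).2 hts) (by omega)⟩
      have hroot : s * ((t / s) ^ (m + 3)) ^ ((m + 3 : ℝ))⁻¹ = t := by
        have := Real.pow_rpow_inv_natCast (n := m + 3) (div_pos ht hs).le (by omega)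
        push_cast at this
        rw [this, mul_div_cancel₀ _ hs.ne']
      show f s _ ≠ 0
      rw [hfe.apply_update_of_eq_zero hperm hsmall hv hb had hpos hs hl, hroot]
      exact mul_ne_zero (Real.rpow_pos_of_pos hl.1 _).ne' hft
    · rintro t₁ ⟨⟨ht₁, -⟩, -⟩ t₂ ⟨⟨ht₂, -⟩, -⟩ h
      have h' : (t₁ / s) ^ (m + 3) = (t₂ / s) ^ (m + 3) := by
        simpa only [div_eq_mul_inv (v a), sub_right_inj, mul_right_inj' ha, inv_inj] using h
      rwa [pow_left_inj₀ (by positivity) (by positivity) (by omega), div_left_inj' hs.ne'] at h'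
  refine (countable_iUnion fun k : ℕ => hT (k + 1) (by positivity)).mono ?_
  rintro t ⟨ht, hft⟩
  obtain ⟨k, hk⟩ := exists_nat_gt t
  exact mem_iUnion.2 ⟨k, ⟨ht, by linarith⟩, hft⟩

theorem SatisfiesFE.vanishesAt_of_apply_eq (hfe : SatisfiesFE p f) (hperm : PermInvariant f)
    {v : EuclideanSpace ℝ (Fin (m + 3))} (hv : v ≠ 0) {a b : Fin (m + 3)} (hab : a ≠ b)
    (heq : v a = v b) (hE : {t : ℝ | 0 < t ∧ f t v ≠ 0}.Countable) : VanishesAt f v := by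
  intro t ht
  set A := {l : ℝ | l ∈ Ioo 0 1 ∧ f (t * l ^ ((m + 3 : ℝ))⁻¹) v ≠ 0}
  have hA : A.Countable := by
    refine MapsTo.countable_of_injOn (f := fun l => t * l ^ ((m + 3 : ℝ))⁻¹) ?_ ?_ hE
    · rintro l ⟨⟨hl, -⟩, hfl⟩
      exact ⟨by positivity, hfl⟩
    · rintro l₁ ⟨⟨hl₁, -⟩, -⟩ l₂ ⟨⟨hl₂, -⟩, -⟩ h
      exact Real.rpow_left_injOn (by positivity) hl₁.le hl₂.le (mul_left_cancel₀ ht.ne' h)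
  have hB : {l : ℝ | l ∈ Ioo 0 1 ∧ f (t * (1 - l) ^ ((m + 3 : ℝ))⁻¹) v ≠ 0}.Countable := by
    refine (hA.image fun l => 1 - l).mono ?_
    rintro l ⟨⟨hl0, hl1⟩, hfl⟩
    exact ⟨1 - l, ⟨⟨by linarith, by linarith⟩, hfl⟩, by ring⟩
  obtain ⟨l, hl, hlAB⟩ := not_subset.1 fun h : Ioo (0 : ℝ) 1 ⊆ _ =>
    (Cardinal.Real.Ioo_countable_iff.not.2 (by norm_num)) ((hA.union hB).mono h)
  simp only [A, mem_union, mem_ofPred_eq, not_or, not_and, not_not] at hlAB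
  have hwb : (1 - l) * v a + l * v b = v b := by
    rw [heq]
    ring
  have hwa : (1 - l) * v a + l * v b = v a := by
    rw [heq]
    ring
  rw [hfe.apply_pair hperm hv hab ht hl]
  nth_rw 1 [hwb]
  rw [hwa]
  simp [hlAB.1 hl, hlAB.2 hl]

theorem SatisfiesFE.vanishesAt_of_two_le_card (hfe : SatisfiesFE p f) (hperm : PermInvariant f)
    (hhom : IsHomogeneousOfDegree (-p) f) (hcount : HasCountableSphereSupport f)
    {n : ℕ} (hsmall : VanishesOnSupportLT f n) {v : EuclideanSpace ℝ (Fin (m + 3))}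
    (hv : #{i | v i ≠ 0} ≤ n) (htwo : 2 ≤ #{i | v i ≠ 0}) (hnc : ∃ i j, v i ≠ v j) :
    VanishesAt f v := by
  by_cases hmix : ∃ a b, v a * v b < 0
  · obtain ⟨a, b, hab⟩ := hmix
    exact hfe.vanishesAt_of_mul_neg hperm hsmall hv hab
  push Not at hmix
  by_cases hdiff : ∃ a b, v a ≠ 0 ∧ v b ≠ 0 ∧ v a ≠ v b
  · obtain ⟨a, b, ha, hb, hab⟩ := hdiff
    have hpos : 0 < v a * v b := (hmix a b).lt_of_ne (mul_ne_zero ha hb).symm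
    have habs : |v a| ≠ |v b| := by
      rw [Ne, abs_eq_abs, not_or]
      refine ⟨hab, fun h => ?_⟩
      rw [h, neg_mul] at hpos
      linarith [mul_self_nonneg (v b)]
    rcases habs.lt_or_gt with hlt | hlt
    · exact hfe.vanishesAt_of_abs_lt hperm hsmall hv (by rwa [mul_comm]) hlt
    · exact hfe.vanishesAt_of_abs_lt hperm hsmall hv hpos hlt
  push Not at hdiff
  obtain ⟨b, hb⟩ : ∃ b, v b = 0 := by
    obtain ⟨i, j, hij⟩ := hnc
    by_contra! h
    exact hij (hdiff i j (h i) (h j))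
  obtain ⟨a, ha, d, hd, had⟩ := Finset.one_lt_card.1 htwo
  simp only [Finset.mem_filter, Finset.mem_univ, true_and] at ha hd
  have hv0 : v ≠ 0 := fun h => ha (by simp [h])
  have heq := hdiff a d ha hd
  exact hfe.vanishesAt_of_apply_eq hperm hv0 had heq
    (hfe.countable_setOf_ne_zero hperm hhom hcount hsmall hv hb had
      (by rw [heq]; exact mul_self_pos.2 hd))

theorem SatisfiesFE.vanishesAt (hfe : SatisfiesFE p f)
    (hhom : IsHomogeneousOfDegree (-p) f) (hcount : HasCountableSphereSupport f)
    (hperm : PermInvariant f)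
    (hvan : ∀ s : ℝ, 0 < s → f s (EuclideanSpace.single 0 1) = 0 ∧
      f s (-EuclideanSpace.single 0 1) = 0)
    {v : EuclideanSpace ℝ (Fin (m + 3))} (hv : v ≠ 0) (hnc : ∃ i j, v i ≠ v j) :
    VanishesAt f v := by
  induction hk : #{i | v i ≠ 0} using Nat.strong_induction_on generalizing v with
  | _ k ih =>
  have hsmall : VanishesOnSupportLT f k := by
    intro u hu hlt
    obtain ⟨j, hj⟩ := exists_eq_zero_of_card_lt (hlt.trans_le (hk ▸ Finset.card_le_univ _))
    obtain ⟨i, hi⟩ : ∃ i, u i ≠ 0 := by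
      by_contra! h
      exact hu (by ext i; simp [h])
    exact ih _ hlt hu ⟨i, j, by rw [hj]; exact hi⟩ rfl
  obtain ⟨i, hi⟩ : ∃ i, v i ≠ 0 := by
    by_contra! h
    exact hv (by ext i; simp [h])
  have hk0 : 0 < k := hk ▸ Finset.card_pos.2 ⟨i, by simpa using hi⟩
  rcases (show k = 1 ∨ 2 ≤ k by omega) with rfl | htwo
  · exact vanishesAt_of_card_eq_one hhom hperm hvan hk
  · exact hfe.vanishesAt_of_two_le_card hperm hhom hcount hsmall hk.le (hk ▸ htwo) hnc

end FunctionalEquation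

theorem stmt_19_general (m : ℕ) (p : ℝ) (f : ℝ → EuclideanSpace ℝ (Fin (m + 3)) → ℝ)
    -- (i) the functional equation
    (hfe : ∀ s : ℝ, 0 < s → ∀ x : EuclideanSpace ℝ (Fin (m + 3)), x ≠ 0 →
      ∀ l ∈ Set.Ioo (0 : ℝ) 1,
      f s x = l ^ (p / (m + 3 : ℝ)) * f (s * l ^ ((m + 3 : ℝ))⁻¹) (phiT l x)
        + (1 - l) ^ (p / (m + 3 : ℝ)) * f (s * (1 - l) ^ ((m + 3 : ℝ))⁻¹) (psiT l x))
    -- (ii) positive homogeneity of degree `-p` in the second argument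
    (hhom : ∀ s : ℝ, 0 < s → ∀ x : EuclideanSpace ℝ (Fin (m + 3)), x ≠ 0 →
      ∀ c : ℝ, 0 < c → f s (c • x) = c ^ (-p) * f s x)
    -- (iii) countable support on the sphere
    (hcount : ∀ s : ℝ, 0 < s →
      {x ∈ Metric.sphere (0 : EuclideanSpace ℝ (Fin (m + 3))) 1 | f s x ≠ 0}.Countable)
    -- (v) invariance under coordinate permutations
    (hperm : ∀ σ : Equiv.Perm (Fin (m + 3)), ∀ s : ℝ, 0 < s →
      ∀ x : EuclideanSpace ℝ (Fin (m + 3)), f s (WithLp.toLp 2 (fun i => x (σ i))) = f s x)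
    -- vanishing at `± e₁`
    (hvan : ∀ s : ℝ, 0 < s → f s (EuclideanSpace.single 0 1) = 0 ∧
      f s (-EuclideanSpace.single 0 1) = 0) :
    ∀ s : ℝ, 0 < s → ∀ x : EuclideanSpace ℝ (Fin (m + 3)), x ≠ 0 →
      x ∉ Submodule.span ℝ {(∑ i, EuclideanSpace.single i (1 : ℝ) :
        EuclideanSpace ℝ (Fin (m + 3)))} → f s x = 0 := by
  intro s hs x hx hspan
  exact SatisfiesFE.vanishesAt hfe hhom hcount hperm hvan hx
    (exists_apply_ne_of_notMem_span hspan) s hs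

theorem stmt_19 (m : ℕ) (p : ℝ) (f : ℝ → EuclideanSpace ℝ (Fin (m + 3)) → ℝ)
    -- (i) the functional equation
    (hfe : ∀ s : ℝ, 0 < s → ∀ x : EuclideanSpace ℝ (Fin (m + 3)), x ≠ 0 →
      ∀ l ∈ Set.Ioo (0 : ℝ) 1,
      f s x = l ^ (p / (m + 3 : ℝ)) * f (s * l ^ ((m + 3 : ℝ))⁻¹) (phiT l x)
        + (1 - l) ^ (p / (m + 3 : ℝ)) * f (s * (1 - l) ^ ((m + 3 : ℝ))⁻¹) (psiT l x))
    -- (ii) positive homogeneity of degree `-p` in the second argument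
    (hhom : ∀ s : ℝ, 0 < s → ∀ x : EuclideanSpace ℝ (Fin (m + 3)), x ≠ 0 →
      ∀ c : ℝ, 0 < c → f s (c • x) = c ^ (-p) * f s x)
    -- (iii) countable support on the sphere
    (hcount : ∀ s : ℝ, 0 < s →
      {x ∈ Metric.sphere (0 : EuclideanSpace ℝ (Fin (m + 3))) 1 | f s x ≠ 0}.Countable)
    -- (iv) boundedness from below on some open interval
    (hbd : ∀ x : EuclideanSpace ℝ (Fin (m + 3)), x ≠ 0 →
      ∃ a b : ℝ, a < b ∧ ∃ c : ℝ, ∀ t ∈ Set.Ioo a b, c ≤ f t x)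
    -- (v) invariance under coordinate permutations
    (hperm : ∀ σ : Equiv.Perm (Fin (m + 3)), ∀ s : ℝ, 0 < s →
      ∀ x : EuclideanSpace ℝ (Fin (m + 3)), f s (WithLp.toLp 2 (fun i => x (σ i))) = f s x)
    -- vanishing at `± e₁`
    (hvan : ∀ s : ℝ, 0 < s → f s (EuclideanSpace.single 0 1) = 0 ∧
      f s (-EuclideanSpace.single 0 1) = 0) :
    ∀ s : ℝ, 0 < s → ∀ x : EuclideanSpace ℝ (Fin (m + 3)), x ≠ 0 →
      x ∉ Submodule.span ℝ {(∑ i, EuclideanSpace.single i (1 : ℝ) :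
        EuclideanSpace ℝ (Fin (m + 3)))} → f s x = 0 :=
  stmt_19_general m p f hfe hhom hcount hperm hvan
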